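/- arXiv:math/9810096 — 3 statements merged into one kernel-verified Lean document; each statement's English description precedes it below -/
import Mathlib

section
/- Let A be a commutative unital C*-algebra and let M be a finitely generated projective A-module. Then M admits a positive definite A-hermitian inner product, i.e. there exists a map α : M × M → A that is A-linear in the first variable, satisfies α(y,x) = (α(x,y))* for all x,y ∈ M, has α(x,x) ≥ 0 (positive in the C*-order) for every x ∈ M, and for which the map M → Hom_A(M,A), x ↦ α(·,x), is a bijection. -/
/-- A positive definite `A`-hermitian inner product on an `A`-module `M`:
a map `α : M × M → A` that is `A`-linear in the first variable, satisfies
`α (y, x) = (α (x, y))*`, has `α (x, x)` positive (`0 ≤ α x x` in the star order),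
and for which `x ↦ α (·, x)` is a bijection from `M` onto `Hom_A(M, A)`. -/
def IsHermitianInnerProduct (A : Type*) [CommRing A] [StarRing A] [PartialOrder A]
    (M : Type*) [AddCommGroup M] [Module A M] (α : M → M → A) : Prop :=
  (∀ (a : A) (x y z : M), α (a • x + y) z = a * α x z + α y z) ∧
  (∀ x y : M, α y x = star (α x y)) ∧
  (∀ x : M, 0 ≤ α x x) ∧
  (∀ φ : M →ₗ[A] A, ∃! x : M, ∀ y : M, φ y = α y x)

open Matrix

/-- Every finitely generated projective module over a commutative unital C*-algebra
admits a positive definite `A`-hermitian inner product. -/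
theorem exists_hermitian_inner_product
    (A : Type*) [NormedCommRing A] [StarRing A] [CStarRing A] [NormedAlgebra ℂ A]
    [StarModule ℂ A] [CompleteSpace A] [PartialOrder A] [StarOrderedRing A]
    (M : Type*) [AddCommGroup M] [Module A M]
    [Module.Finite A M] [Module.Projective A M] :
    ∃ α : M → M → A, IsHermitianInnerProduct A M α := by
  classical
  obtain ⟨n, f, hf⟩ := Module.Finite.exists_fin' A M
  obtain ⟨s, hs⟩ := Module.projective_lifting_property f LinearMap.id hf
  have hfs : ∀ x : M, f (s x) = x := fun x => LinearMap.congr_fun hs x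
  set e : Matrix (Fin n) (Fin n) A := LinearMap.toMatrix' (s.comp f) with he_def
  have hmul : ∀ vv : Fin n → A, e *ᵥ vv = s (f vv) := by
    intro vv
    rw [← Matrix.toLin'_apply, he_def, Matrix.toLin'_toMatrix']
    rfl
  have he : e * e = e := by
    rw [he_def, ← LinearMap.toMatrix'_comp]
    congr 1
    ext vv i
    simp [LinearMap.comp_apply, hfs]
  set d : Matrix (Fin n) (Fin n) A := e - eᴴ with hd_def
  set u : Matrix (Fin n) (Fin n) A := 1 + dᴴ * d with hu_def
  letI : CStarAlgebra A :=
    { ‹NormedCommRing A›.toNormedRing, ‹StarRing A›, ‹CStarRing A›,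
      ‹NormedAlgebra ℂ A›, ‹StarModule ℂ A›, ‹CompleteSpace A› with }
  -- u is invertible
  have hu_unit : IsUnit u := by
    rw [Matrix.isUnit_iff_isUnit_det, ← spectrum.zero_notMem_iff ℂ]
    intro hmem
    obtain ⟨χ, hχ⟩ := WeakDual.CharacterSpace.mem_spectrum_iff_exists.mp hmem
    set ρ : A →+* ℂ := RingHomClass.toRingHom χ with hρ_def
    have hρs : ∀ a : A, ρ (star a) = star (ρ a) := fun a => map_star χ a
    have h1 : ρ u.det = (u.map ρ).det := RingHom.map_det ρ u
    have h2 : u.map ρ = (1 : Matrix (Fin n) (Fin n) ℂ) + (d.map ρ)ᴴ * (d.map ρ) := by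
      ext i j
      simp [hu_def, Matrix.map_apply, Matrix.mul_apply, Matrix.one_apply,
        Matrix.conjTranspose_apply, map_sum, _root_.map_mul, _root_.map_add, hρs, apply_ite ρ]
    open scoped ComplexOrder in
    have hpd : ((1 : Matrix (Fin n) (Fin n) ℂ) + (d.map ρ)ᴴ * (d.map ρ)).PosDef :=
      Matrix.PosDef.add_posSemidef Matrix.PosDef.one
        (Matrix.posSemidef_conjTranspose_mul_self _)
    have hdetpos := hpd.det_pos
    rw [← h2, ← h1] at hdetpos
    have : ρ u.det = 0 := hχ
    rw [this] at hdetpos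
    exact lt_irrefl _ hdetpos
  obtain ⟨U, hU⟩ := hu_unit
  set v : Matrix (Fin n) (Fin n) A := (↑U⁻¹ : Matrix (Fin n) (Fin n) A) with hv_def
  have hv1 : u * v = 1 := by rw [hv_def, ← hU]; exact U.mul_inv
  have hv2 : v * u = 1 := by rw [hv_def, ← hU]; exact U.inv_mul
  have he' : eᴴ * eᴴ = eᴴ := by rw [← Matrix.conjTranspose_mul, he]
  have hexp : u = 1 - e - eᴴ + eᴴ * e + e * eᴴ := by
    have expand : dᴴ * d = eᴴ * e - eᴴ * eᴴ - e * e + e * eᴴ := by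
      rw [hd_def]
      simp only [Matrix.conjTranspose_sub, Matrix.conjTranspose_conjTranspose]
      noncomm_ring
    rw [hu_def, expand, he, he']
    noncomm_ring
  have h1 : u * e = e * eᴴ * e := by
    rw [hexp]
    rw [show (1 - e - eᴴ + eᴴ * e + e * eᴴ) * e
        = e - e * e - eᴴ * e + eᴴ * (e * e) + e * (eᴴ * e) from by noncomm_ring]
    rw [he]
    noncomm_ring
  have h2 : e * u = e * eᴴ * e := by
    rw [hexp]
    rw [show e * (1 - e - eᴴ + eᴴ * e + e * eᴴ)
        = e - e * e - e * eᴴ + (e * eᴴ) * e + (e * e) * eᴴ from by noncomm_ring]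
    rw [he]
    noncomm_ring
  have hue : u * e = e * u := by rw [h1, h2]
  have hu_star : uᴴ = u := by
    rw [hu_def]
    simp [Matrix.conjTranspose_add, Matrix.conjTranspose_mul,
      Matrix.conjTranspose_conjTranspose]
  have hv_star : vᴴ = v := by
    have h3 : vᴴ * u = 1 := by
      have := congrArg Matrix.conjTranspose hv1
      simpa [Matrix.conjTranspose_mul, hu_star] using this
    calc vᴴ = vᴴ * (u * v) := by rw [hv1, mul_one]
      _ = (vᴴ * u) * v := by rw [mul_assoc]
      _ = v := by rw [h3, one_mul]
  have hvcomm : v * e = e * v := by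
    calc v * e = v * e * (u * v) := by rw [hv1, mul_one]
      _ = v * (e * u) * v := by noncomm_ring
      _ = v * (u * e) * v := by rw [hue]
      _ = (v * u) * (e * v) := by noncomm_ring
      _ = e * v := by rw [hv2, one_mul]
  have hvcomm' : v * eᴴ = eᴴ * v := by
    have := congrArg Matrix.conjTranspose hvcomm
    simpa [Matrix.conjTranspose_mul, hv_star] using this.symm
  set p : Matrix (Fin n) (Fin n) A := e * eᴴ * v with hp_def
  have hpe : p * e = e := by
    calc p * e = e * eᴴ * (v * e) := by rw [hp_def]; noncomm_ring
      _ = e * eᴴ * (e * v) := by rw [hvcomm]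
      _ = (e * eᴴ * e) * v := by noncomm_ring
      _ = (e * u) * v := by rw [h2]
      _ = e * (u * v) := by rw [mul_assoc]
      _ = e := by rw [hv1, mul_one]
  have hep : e * p = p := by
    calc e * p = (e * e) * eᴴ * v := by rw [hp_def]; noncomm_ring
      _ = p := by rw [he, hp_def]
  have hp_star : pᴴ = p := by
    calc pᴴ = vᴴ * (e * eᴴ)ᴴ := by rw [hp_def, Matrix.conjTranspose_mul]
      _ = v * (e * eᴴ) := by
          rw [hv_star, Matrix.conjTranspose_mul, Matrix.conjTranspose_conjTranspose]
      _ = (v * e) * eᴴ := by rw [mul_assoc]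
      _ = e * (v * eᴴ) := by rw [hvcomm, mul_assoc]
      _ = e * (eᴴ * v) := by rw [hvcomm']
      _ = p := by rw [hp_def, mul_assoc]
  -- the inner product
  refine ⟨fun x y => (s x) ⬝ᵥ star (s y), ?_, ?_, ?_, ?_⟩
  · intro a x y z
    simp [_root_.map_add, _root_.map_smul, add_dotProduct, smul_dotProduct, smul_eq_mul]
  · intro x y
    simp only [dotProduct, Pi.star_apply, star_sum, star_mul', star_star]
    exact Finset.sum_congr rfl fun i _ => mul_comm _ _
  · intro x
    show (0:A) ≤ ∑ i, s x i * star (s x) i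
    exact Finset.sum_nonneg fun i _ => mul_star_self_nonneg _
  · intro φ
    set w : Fin n → A := fun i => star (φ (f (Pi.single i 1))) with hw_def
    have hφ : ∀ vv : Fin n → A, φ (f vv) = vv ⬝ᵥ star w := by
      intro vv
      have hvv : vv = ∑ i, vv i • (Pi.single i 1 : Fin n → A) := by
        funext j
        simp [Pi.single_apply, Finset.sum_apply, Pi.smul_apply, smul_eq_mul,
          Finset.sum_ite_eq', mul_ite]
      conv_lhs => rw [hvv]
      rw [map_sum, map_sum]
      simp [hw_def, dotProduct, _root_.map_smul, smul_eq_mul]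
    have hsy : ∀ y : M, e *ᵥ s y = s y := by
      intro y
      rw [hmul, hfs]
    have hx : ∀ y : M, φ y = s y ⬝ᵥ star (s (f (p *ᵥ w))) := by
      intro y
      have hsx : s (f (p *ᵥ w)) = p *ᵥ w := by
        rw [← hmul, Matrix.mulVec_mulVec, hep]
      rw [hsx]
      have hstar : star (p *ᵥ w) = star w ᵥ* p := by
        rw [Matrix.star_mulVec, hp_star]
      rw [hstar, dotProduct_comm, ← Matrix.dotProduct_mulVec, ← hsy y,
        Matrix.mulVec_mulVec, hpe, hsy y, dotProduct_comm]
      calc φ y = φ (f (s y)) := by rw [hfs]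
        _ = s y ⬝ᵥ star w := hφ (s y)
    refine ⟨f (p *ᵥ w), hx, ?_⟩
    · intro x' hx'
      have hx'2 : ∀ y : M, φ y = s y ⬝ᵥ star (s x') := hx'
      set x : M := f (p *ᵥ w) with hx_def
      have key : ∀ y : M, s y ⬝ᵥ star (s x' - s x) = 0 := by
        intro y
        have := (hx'2 y).symm.trans (hx y)
        rw [star_sub, dotProduct_sub, this, sub_self]
      have key2 : (s x' - s x) ⬝ᵥ star (s x' - s x) = 0 := by
        have h1' := key x'
        have h2' := key x
        rw [sub_dotProduct, h1', h2', sub_self]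
      have hzero : ∀ i, (s x' - s x) i = 0 := by
        intro i
        have hterm : ∀ j ∈ Finset.univ, (0:A) ≤ (s x' - s x) j * star ((s x' - s x) j) :=
          fun j _ => mul_star_self_nonneg _
        have := (Finset.sum_eq_zero_iff_of_nonneg hterm).mp key2 i (Finset.mem_univ i)
        exact (CStarRing.mul_star_self_eq_zero_iff _).mp this
      have hss : s x' = s x := by
        funext i
        have := hzero i
        simpa [sub_eq_zero] using this
      calc x' = f (s x') := (hfs x').symm
        _ = f (s x) := by rw [hss]
        _ = x := hfs x
end

section
/- Let A be a commutative unital C*-algebra and M a finitely generated projective A-module. Let β₁, …, β_k be positive definite A-hermitian inner products on M, and let a₁, …, a_k ∈ A be positive elements (0 ≤ a_i in the C*-order) with a₁ + ⋯ + a_k = 1. Then the map γ : M × M → A defined by γ(x, y) := Σ_{i=1}^k a_i · β_i(x, y) is a positive definite A-hermitian inner product on M. -/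
/-!
Fix one of the forms, `β₀ = β_{i₀}`, as a reference. The Riesz maps of `γ = ∑ aᵢ βᵢ` and of `β₀`
differ by an `A`-linear endomorphism `T` of `M`, so it suffices that `T` is bijective. As `M` is
finitely generated, Nakayama's lemma and Orzech's theorem (a surjective endomorphism of a finitely
generated module is injective) reduce this to injectivity of `T` modulo each maximal ideal `𝔪`,
i.e. to: `γ(·, x) ∈ 𝔪` implies `x ∈ 𝔪 M`. Evaluate at the character `χ` with kernel `𝔪`: the
terms `χ(aᵢ) χ(βᵢ(x, x))` are nonnegative, sum to `0`, and `∑ χ(aᵢ) = 1`, so `χ(β_j(x, x)) = 0`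
for some `j` with `χ(a_j) ≠ 0`. Cauchy–Schwarz for the positive semidefinite form `χ ∘ β_j` gives
`β_j(·, x) ∈ 𝔪`, and since `M` is projective and `β_j` nondegenerate, every functional maps `x`
into `𝔪`, whence `x ∈ 𝔪 M`.
-/

open Function ComplexConjugate

section Nakayama

variable {R M : Type*} [CommRing R] [AddCommGroup M] [Module R M]

theorem Submodule.eq_top_of_forall_isMaximal_sup_smul_top_eq_top [Module.Finite R M]
    {N : Submodule R M} (h : ∀ 𝔪 : Ideal R, 𝔪.IsMaximal → N ⊔ 𝔪 • ⊤ = ⊤) : N = ⊤ := by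
  by_contra hN
  have hcolon : N.colon (⊤ : Submodule R M) ≠ ⊤ := by
    rwa [Ne, colon_eq_top_iff_subset, SetLike.coe_subset_coe, top_le_iff]
  obtain ⟨𝔪, h𝔪, hle⟩ := Ideal.exists_le_maximal _ hcolon
  obtain ⟨r, hr1, hr⟩ := exists_sub_one_mem_and_smul_le_of_fg_of_le_sup
    Module.Finite.fg_top le_rfl (h 𝔪 h𝔪).ge
  have hr𝔪 : r ∈ 𝔪 := hle (mem_colon_iff_le.2 hr)
  exact h𝔪.ne_top ((Ideal.eq_top_iff_one _).2 (by simpa using 𝔪.sub_mem hr𝔪 hr1))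

theorem LinearMap.range_sup_smul_top_eq_top_of_injective_mod {𝔪 : Ideal R} [𝔪.IsMaximal]
    [Module.Finite R M] (T : M →ₗ[R] M)
    (hT : ∀ x, T x ∈ (𝔪 • ⊤ : Submodule R M) → x ∈ (𝔪 • ⊤ : Submodule R M)) :
    range T ⊔ 𝔪 • (⊤ : Submodule R M) = ⊤ := by
  let := Ideal.Quotient.field 𝔪
  have hle : 𝔪 • ⊤ ≤ (𝔪 • ⊤ : Submodule R M).comap T := by
    rw [← Submodule.map_le_iff_le_comap, Submodule.map_smul'']
    exact Submodule.smul_mono le_rfl le_top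
  let Tbar : (M ⧸ 𝔪 • (⊤ : Submodule R M)) →ₗ[R ⧸ 𝔪] M ⧸ 𝔪 • (⊤ : Submodule R M) :=
    (Submodule.mapQ _ _ T hle).extendScalarsOfSurjective Ideal.Quotient.mk_surjective
  have hinj : Injective Tbar := by
    rw [← LinearMap.ker_eq_bot, Submodule.eq_bot_iff]
    intro v hv
    obtain ⟨x, rfl⟩ := Submodule.Quotient.mk_surjective _ v
    simp only [Tbar, LinearMap.mem_ker, LinearMap.extendScalarsOfSurjective_apply,
      Submodule.mapQ_apply, Submodule.Quotient.mk_eq_zero] at hv ⊢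
    exact hT x hv
  have hsurj : Surjective (Submodule.mapQ _ _ T hle) :=
    LinearMap.injective_iff_surjective.1 hinj
  rw [sup_comm, ← Submodule.map_mkQ_eq_top, ← LinearMap.range_comp, LinearMap.range_eq_top]
  intro v
  obtain ⟨w, rfl⟩ := hsurj v
  obtain ⟨y, rfl⟩ := Submodule.Quotient.mk_surjective _ w
  exact ⟨y, rfl⟩

theorem Module.Projective.mem_smul_top_of_forall_dual_mem [Module.Projective R M] {I : Ideal R}
    {x : M} (h : ∀ f : M →ₗ[R] R, f x ∈ I) : x ∈ I • (⊤ : Submodule R M) := by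
  obtain ⟨s, hs⟩ := Module.projective_def.1 ‹_›
  rw [← hs x, Finsupp.linearCombination_apply]
  exact Submodule.finsuppSum_mem _ _ _ _ fun p _ ↦
    Submodule.smul_mem_smul (h (Finsupp.lapply p ∘ₗ s)) Submodule.mem_top

theorem LinearMap.bijective_of_forall_isMaximal [Module.Finite R M] (T : M →ₗ[R] M)
    (hT : ∀ 𝔪 : Ideal R, 𝔪.IsMaximal →
      ∀ x, T x ∈ (𝔪 • ⊤ : Submodule R M) → x ∈ (𝔪 • ⊤ : Submodule R M)) :
    Bijective T := by
  have hsurj : Surjective T := range_eq_top.1 <|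
    Submodule.eq_top_of_forall_isMaximal_sup_smul_top_eq_top fun 𝔪 h𝔪 ↦
      T.range_sup_smul_top_eq_top_of_injective_mod (hT 𝔪 h𝔪)
  exact ⟨OrzechProperty.injective_of_surjective_endomorphism T hsurj, hsurj⟩

end Nakayama

section HermitianForm

variable (A : Type*) [CommRing A] [StarRing A] (M : Type*) [AddCommGroup M] [Module A M]

def IsHermitianForm (α : M → M → A) : Prop :=
  (∀ (a : A) (x y z : M), α (a • x + y) z = a * α x z + α y z) ∧
    ∀ x y : M, α y x = star (α x y)

variable {A M} {α : M → M → A}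

namespace IsHermitianForm

variable (h : IsHermitianForm A M α)
include h

theorem map_add_left (x y z : M) : α (x + y) z = α x z + α y z := by
  simpa using h.1 1 x y z

theorem map_smul_left (a : A) (x z : M) : α (a • x) z = a * α x z := by
  have h0 : α 0 z = 0 := by simpa using h.1 1 0 0 z
  simpa [h0] using h.1 a x 0 z

theorem map_add_right (x y z : M) : α z (x + y) = α z x + α z y := by
  rw [h.2, h.map_add_left, star_add, ← h.2, ← h.2]

theorem map_smul_right (a : A) (x z : M) : α z (a • x) = star a * α z x := by
  rw [h.2, h.map_smul_left, star_mul', ← h.2]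

def rieszMap : M →ₗ⋆[A] M →ₗ[A] A :=
  LinearMap.mk₂'ₛₗ (starRingEnd A) (RingHom.id A) (fun x y ↦ α y x)
    (fun x x' y ↦ h.map_add_right x x' y) (fun a x y ↦ h.map_smul_right a x y)
    (fun x y y' ↦ h.map_add_left y y' x) fun a x y ↦ h.map_smul_left a y x

@[simp]
theorem rieszMap_apply (x y : M) : h.rieszMap x y = α y x := rfl

theorem map_mem_of_mem_smul_top {I : Ideal A} (hI : ∀ b ∈ I, star b ∈ I) {x : M}
    (hx : x ∈ I • (⊤ : Submodule A M)) (y : M) : α y x ∈ I := by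
  refine Submodule.smul_induction_on hx (fun r hr x _ ↦ ?_) fun x x' hx hx' ↦ ?_
  · rw [h.map_smul_right]
    exact I.mul_mem_right _ (hI r hr)
  · rw [h.map_add_right]
    exact I.add_mem hx hx'

theorem mem_smul_top_of_forall_mem [Module.Projective A M] (hα : Surjective h.rieszMap)
    {I : Ideal A} (hI : ∀ b ∈ I, star b ∈ I) {x : M} (hx : ∀ y, α y x ∈ I) :
    x ∈ I • (⊤ : Submodule A M) :=
  Module.Projective.mem_smul_top_of_forall_dual_mem fun f ↦ by
    obtain ⟨w, rfl⟩ := hα f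
    rw [rieszMap_apply, h.2]
    exact hI _ (hx w)

theorem rieszMap_bijective_of_forall_isMaximal [Module.Finite A M] {β : M → M → A}
    (hβ : IsHermitianForm A M β) (hβR : Bijective hβ.rieszMap)
    (hstar : ∀ 𝔪 : Ideal A, 𝔪.IsMaximal → ∀ b ∈ 𝔪, star b ∈ 𝔪)
    (hfib : ∀ 𝔪 : Ideal A, 𝔪.IsMaximal →
      ∀ x, (∀ y, α y x ∈ 𝔪) → x ∈ 𝔪 • (⊤ : Submodule A M)) :
    Bijective h.rieszMap := by
  let e := LinearEquiv.ofBijective hβ.rieszMap hβR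
  let T : M →ₗ[A] M := e.symm.toLinearMap.comp h.rieszMap
  have hRT : ∀ x, hβ.rieszMap (T x) = h.rieszMap x := fun x ↦ e.apply_symm_apply _
  have hTbij : Bijective T := T.bijective_of_forall_isMaximal fun 𝔪 h𝔪 x hx ↦
    hfib 𝔪 h𝔪 x fun y ↦ by
      simpa only [← rieszMap_apply hβ, hRT x, rieszMap_apply] using
        hβ.map_mem_of_mem_smul_top (hstar 𝔪 h𝔪) hx y
  rw [show ⇑h.rieszMap = hβ.rieszMap ∘ T from funext fun x ↦ (hRT x).symm]
  exact hβR.comp hTbij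

end IsHermitianForm

theorem IsHermitianForm.sum_mul {ι : Type*} [Fintype ι] {β : ι → M → M → A}
    (hβ : ∀ i, IsHermitianForm A M (β i)) {a : ι → A} (ha : ∀ i, IsSelfAdjoint (a i)) :
    IsHermitianForm A M (fun x y ↦ ∑ i, a i * β i x y) := by
  refine ⟨fun b x y z ↦ ?_, fun x y ↦ ?_⟩
  · simp only [(hβ _).1, mul_add, Finset.sum_add_distrib, Finset.mul_sum, mul_left_comm]
  · simp only [star_sum, star_mul', (ha _).star_eq, ← (hβ _).2]

section InnerProduct

variable [PartialOrder A]

theorem IsHermitianInnerProduct.isHermitianForm (h : IsHermitianInnerProduct A M α) :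
    IsHermitianForm A M α := ⟨h.1, h.2.1⟩

theorem IsHermitianInnerProduct.apply_self_nonneg (h : IsHermitianInnerProduct A M α) (x : M) :
    0 ≤ α x x := h.2.2.1 x

theorem IsHermitianInnerProduct.rieszMap_bijective (h : IsHermitianInnerProduct A M α) :
    Bijective h.isHermitianForm.rieszMap :=
  bijective_iff_existsUnique _ |>.2 fun φ ↦ by
    simpa [LinearMap.ext_iff, eq_comm] using h.2.2.2 φ

theorem IsHermitianForm.isHermitianInnerProduct (h : IsHermitianForm A M α)
    (hpos : ∀ x, 0 ≤ α x x) (hR : Bijective h.rieszMap) : IsHermitianInnerProduct A M α :=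
  ⟨h.1, h.2, hpos, fun φ ↦ by
    simpa [LinearMap.ext_iff, eq_comm] using (bijective_iff_existsUnique _).1 hR φ⟩

end InnerProduct

end HermitianForm

open scoped ComplexOrder in
theorem Complex.eq_zero_of_forall_nonneg_add_conj_mul {r z : ℂ}
    (h : ∀ c : ℂ, 0 ≤ r + conj c * z + c * conj z) : z = 0 := by
  by_contra hz
  have hz' : conj z ≠ 0 := by simpa using hz
  let c : ℂ := -(r.re + 1) / (2 * conj z)
  -- chosen so that the last two summands of `h c` add up to `-(r.re + 1)`
  have hc : c * conj z = ((-(r.re + 1) / 2 : ℝ) : ℂ) := by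
    simp only [c]; push_cast; field_simp
  have hc' : conj c * z = ((-(r.re + 1) / 2 : ℝ) : ℂ) := by
    rw [← Complex.conj_ofReal, ← hc, map_mul, Complex.conj_conj]
  have := (Complex.le_def.1 (h c)).1
  simp only [add_assoc, hc, hc', Complex.add_re, Complex.ofReal_re, Complex.zero_re] at this
  linarith

theorem Ideal.toCharacterSpace_apply_eq_zero_iff {A : Type*} [NormedCommRing A]
    [NormedAlgebra ℂ A] [CompleteSpace A] (I : Ideal A) [hI : I.IsMaximal] {a : A} :
    I.toCharacterSpace a = 0 ↔ a ∈ I := by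
  refine ⟨fun ha ↦ ?_, I.toCharacterSpace_apply_eq_zero_of_mem⟩
  have hker : I = RingHom.ker I.toCharacterSpace :=
    hI.eq_of_le (RingHom.ker_ne_top _) fun b hb ↦ I.toCharacterSpace_apply_eq_zero_of_mem hb
  rwa [hker, RingHom.mem_ker]

section CStarAlgebra

variable {A : Type*} [CommCStarAlgebra A] {M : Type*} [AddCommGroup M] [Module A M]

theorem Ideal.IsMaximal.star_mem {I : Ideal A} (hI : I.IsMaximal) {a : A} (ha : a ∈ I) :
    star a ∈ I := by
  rw [← I.toCharacterSpace_apply_eq_zero_iff] at ha ⊢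
  rw [map_star, ha, star_zero]

variable [PartialOrder A] [StarOrderedRing A]
open scoped ComplexOrder

theorem IsHermitianForm.character_apply_eq_zero {α : M → M → A} (h : IsHermitianForm A M α)
    (hpos : ∀ x, 0 ≤ α x x) (χ : WeakDual.characterSpace ℂ A) {x : M} (hx : χ (α x x) = 0)
    (y : M) : χ (α y x) = 0 := by
  refine Complex.eq_zero_of_forall_nonneg_add_conj_mul (r := χ (α y y)) fun c ↦ ?_
  set c' := algebraMap ℂ A c
  have hexp : α (y + c' • x) (y + c' • x) =
      α y y + star c' * α y x + c' * star (α y x) + c' * (star c' * α x x) := by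
    rw [h.map_add_left, h.map_add_right, h.map_add_right, h.map_smul_left, h.map_smul_left,
      h.map_smul_right, h.map_smul_right, h.2 y x]
    ring
  simpa [hexp, map_star, hx, c', AlgHomClass.commutes] using
    map_nonneg χ (hpos (y + c' • x))

theorem mem_smul_top_of_forall_sum_mul_mem [Module.Projective A M] {ι : Type*} [Fintype ι]
    {β : ι → M → M → A} (hβ : ∀ i, IsHermitianInnerProduct A M (β i)) {a : ι → A}
    (ha : ∀ i, 0 ≤ a i) (hsum : ∑ i, a i = 1) {𝔪 : Ideal A} (h𝔪 : 𝔪.IsMaximal) {x : M}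
    (hx : ∀ y, ∑ i, a i * β i y x ∈ 𝔪) : x ∈ 𝔪 • (⊤ : Submodule A M) := by
  let χ := 𝔪.toCharacterSpace
  have hχx : ∑ i, χ (a i) * χ (β i x x) = 0 := by
    simpa [map_sum, map_mul] using 𝔪.toCharacterSpace_apply_eq_zero_iff.2 (hx x)
  obtain ⟨j, -, hj⟩ : ∃ j ∈ Finset.univ, χ (a j) ≠ 0 :=
    Finset.exists_ne_zero_of_sum_ne_zero (by rw [← map_sum, hsum, map_one]; exact one_ne_zero)
  have hχjx : χ (β j x x) = 0 := by
    have hnonneg : ∀ i ∈ Finset.univ, 0 ≤ χ (a i) * χ (β i x x) := fun i _ ↦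
      mul_nonneg (map_nonneg χ (ha i)) (map_nonneg χ ((hβ i).apply_self_nonneg x))
    exact (mul_eq_zero.1 ((Finset.sum_eq_zero_iff_of_nonneg hnonneg).1 hχx j
      (Finset.mem_univ j))).resolve_left hj
  refine (hβ j).isHermitianForm.mem_smul_top_of_forall_mem (hβ j).rieszMap_bijective.2
    (fun b ↦ h𝔪.star_mem) fun y ↦ 𝔪.toCharacterSpace_apply_eq_zero_iff.1 ?_
  exact (hβ j).isHermitianForm.character_apply_eq_zero (hβ j).apply_self_nonneg χ hχjx y

end CStarAlgebra

/-- A combination `γ (x, y) = ∑ a_i β_i (x, y)` of positive definite `A`-hermitian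
inner products on a finitely generated projective module, with positive coefficients
`a_i` summing to `1`, is again a positive definite `A`-hermitian inner product. -/
theorem hermitian_inner_product_partition_of_unity_combination
    (A : Type*) [NormedCommRing A] [StarRing A] [CStarRing A] [NormedAlgebra ℂ A]
    [StarModule ℂ A] [CompleteSpace A] [PartialOrder A] [StarOrderedRing A]
    (M : Type*) [AddCommGroup M] [Module A M]
    [Module.Finite A M] [Module.Projective A M]
    (k : ℕ) (β : Fin k → M → M → A)
    (hβ : ∀ i, IsHermitianInnerProduct A M (β i))
    (a : Fin k → A) (ha : ∀ i, 0 ≤ a i) (hsum : ∑ i, a i = 1) :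
    IsHermitianInnerProduct A M (fun x y => ∑ i, a i * β i x y) := by
  let _ : CommCStarAlgebra A := {}
  have hγ := IsHermitianForm.sum_mul (fun i ↦ (hβ i).isHermitianForm) fun i ↦
    (ha i).isSelfAdjoint
  refine hγ.isHermitianInnerProduct (fun x ↦ Finset.sum_nonneg fun i _ ↦
    Commute.mul_nonneg (ha i) ((hβ i).apply_self_nonneg x) (Commute.all _ _)) ?_
  cases isEmpty_or_nonempty (Fin k) with
  | inl _ =>
    have : Subsingleton A := subsingleton_of_zero_eq_one (by simpa using hsum)
    have : Subsingleton M := Module.subsingleton A M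
    exact ⟨fun _ _ _ ↦ Subsingleton.elim _ _, fun _ ↦ ⟨0, Subsingleton.elim _ _⟩⟩
  | inr hk =>
    obtain ⟨i₀⟩ := hk
    exact hγ.rieszMap_bijective_of_forall_isMaximal (hβ i₀).isHermitianForm
      (hβ i₀).rieszMap_bijective (fun 𝔪 h𝔪 _ ↦ h𝔪.star_mem)
      fun 𝔪 h𝔪 _ ↦ mem_smul_top_of_forall_sum_mul_mem hβ ha hsum h𝔪
end

section
/- Let A be a commutative topological ring, m ∈ ℕ, and let M be a submodule of A^m that is a direct summand (i.e. there is a submodule M₁ of A^m with A^m = M ⊕ M₁). Endow M with the subspace topology inherited from the product topology of A^m. Then for every topological A-module N, every A-linear map f : M → N is continuous. -/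
theorem Submodule.continuous_of_continuous_comp_projectionOnto
    {R E N : Type*} [Ring R] [AddCommGroup E] [Module R E] [TopologicalSpace E]
    [AddCommGroup N] [Module R N] [TopologicalSpace N]
    {p q : Submodule R E} (hpq : IsCompl p q) (f : p →ₗ[R] N)
    (hf : Continuous (f ∘ₗ p.projectionOnto q hpq)) : Continuous f := by
  have hrestrict : (f ∘ₗ p.projectionOnto q hpq) ∘ₗ p.subtype = f := by
    rw [LinearMap.comp_assoc, Submodule.projectionOnto_comp_subtype, LinearMap.comp_id]
  rw [← hrestrict]
  exact hf.comp continuous_subtype_val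

theorem linearMap_continuous_of_isCompl_summand_general
    (A : Type*) [CommRing A] [TopologicalSpace A]
    (m : ℕ) (M M₁ : Submodule A (Fin m → A)) (hcompl : IsCompl M M₁)
    (N : Type*) [AddCommGroup N] [Module A N] [TopologicalSpace N]
    [ContinuousAdd N] [ContinuousSMul A N]
    (f : M →ₗ[A] N) : Continuous f :=
  M.continuous_of_continuous_comp_projectionOnto hcompl f (LinearMap.continuous_on_pi _)

/-- Let `A` be a commutative topological ring and `M` a direct summand of `A^m`,
endowed with the subspace topology from the product topology of `A^m`. Then every
`A`-linear map from `M` to any topological `A`-module `N` is continuous. -/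
theorem linearMap_continuous_of_isCompl_summand
    (A : Type*) [CommRing A] [TopologicalSpace A] [IsTopologicalRing A]
    (m : ℕ) (M M₁ : Submodule A (Fin m → A)) (hcompl : IsCompl M M₁)
    (N : Type*) [AddCommGroup N] [Module A N] [TopologicalSpace N]
    [ContinuousAdd N] [ContinuousSMul A N]
    (f : M →ₗ[A] N) : Continuous f :=
  linearMap_continuous_of_isCompl_summand_general A m M M₁ hcompl N f
end
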